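/- For every x ∈ U and all indices i, j, the second derivative of the second fundamental form at t = 0 is ∂²h_{ij}(t)/∂t² |_{t=0} = φ''(0) g_{ij}(x) + 4 (∂f/∂x_i)(x)(∂f/∂x_j)(x) − |∇f(x)|² g_{ij}(x). -/

import Mathlib

open MeasureTheory Real Set
open scoped RealInnerProductSpace

noncomputable section

abbrev En (n : ℕ) : Type := EuclideanSpace ℝ (Fin n)

/-- Partial derivative of `F` in the `i`-th coordinate direction. -/
def pd {m : ℕ} {E : Type} [NormedAddCommGroup E] [NormedSpace ℝ E]
    (i : Fin m) (F : En m → E) (x : En m) : E :=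
  fderiv ℝ F x (EuclideanSpace.single i 1)

/-- The induced (first fundamental form) metric of a map `Y : U → ℝ^{n+1}`. -/
def gmet {n : ℕ} (Y : En n → En (n + 1)) (x : En n) : Matrix (Fin n) (Fin n) ℝ :=
  Matrix.of fun i j => ⟪pd i Y x, pd j Y x⟫

/-- The variation `X(t,x) = (1 + t f(x) + φ(t)) Φ(x)`. -/
def Xvar {n : ℕ} (f : En n → ℝ) (φ : ℝ → ℝ) (Φ : En n → En (n + 1)) (t : ℝ) (x : En n) :
    En (n + 1) :=
  (1 + t * f x + φ t) • Φ x

/-- Second fundamental form `h_{ij} = ⟨∂X/∂x_i, ∂N/∂x_j⟩`. -/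
def sff {n : ℕ} (Y Nf : En n → En (n + 1)) (x : En n) : Matrix (Fin n) (Fin n) ℝ :=
  Matrix.of fun i j => ⟪pd i Y x, pd j Nf x⟫

/-- Mean curvature `H = (1/n) Σ g^{ij} h_{ij}`. -/
def Hmean {n : ℕ} (Y Nf : En n → En (n + 1)) (x : En n) : ℝ :=
  (1 / (n : ℝ)) * ∑ i, ∑ j, (gmet Y x)⁻¹ i j * sff Y Nf x i j

/-- The volume element `√(det g)`. -/
def vElem {n : ℕ} (Y : En n → En (n + 1)) (x : En n) : ℝ :=
  Real.sqrt (gmet Y x).det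

/-- `|∇u|² = Σ g^{ij} ∂_i u ∂_j u` with respect to the metric of `Φ`. -/
def gradSq {n : ℕ} (Φ : En n → En (n + 1)) (u : En n → ℝ) (x : En n) : ℝ :=
  ∑ i, ∑ j, (gmet Φ x)⁻¹ i j * pd i u x * pd j u x

/-- Tangential gradient `∇u = Σ g^{ij} ∂_i u ∂_j Φ ∈ ℝ^{n+1}`. -/
def gradV {n : ℕ} (Φ : En n → En (n + 1)) (u : En n → ℝ) (x : En n) : En (n + 1) :=
  ∑ i, ∑ j, ((gmet Φ x)⁻¹ i j * pd i u x) • pd j Φ x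

/-- Laplace–Beltrami operator `Δu = (1/√g) Σ ∂_i (√g g^{ij} ∂_j u)`. -/
def lapl {n : ℕ} (Φ : En n → En (n + 1)) (u : En n → ℝ) (x : En n) : ℝ :=
  (vElem Φ x)⁻¹ * ∑ i, ∑ j, pd i (fun y => vElem Φ y * (gmet Φ y)⁻¹ i j * pd j u y) x

/-- Christoffel symbols of the metric of `Φ`. -/
def christoffel {n : ℕ} (Φ : En n → En (n + 1)) (k i j : Fin n) (x : En n) : ℝ :=
  (1 / 2) * ∑ l, (gmet Φ x)⁻¹ k l *
    (pd i (fun y => gmet Φ y l j) x + pd j (fun y => gmet Φ y l i) x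
      - pd l (fun y => gmet Φ y i j) x)

/-- Hessian `(∇²u)_{ij} = ∂²u/∂x_i∂x_j − Σ_k Γ^k_{ij} ∂_k u`. -/
def hess {n : ℕ} (Φ : En n → En (n + 1)) (u : En n → ℝ) (x : En n) (i j : Fin n) : ℝ :=
  pd i (fun y => pd j u y) x - ∑ k, christoffel Φ k i j x * pd k u x

section Helpers

variable {m : ℕ} {E : Type} [NormedAddCommGroup E] [NormedSpace ℝ E]

lemma pd_contDiffAt {F : En m → E} {x : En m} (i : Fin m) (h : ContDiffAt ℝ (⊤ : ℕ∞) F x) :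
    ContDiffAt ℝ (⊤ : ℕ∞) (fun y => pd i F y) x :=
  (h.fderiv_right (by simp)).clm_apply contDiffAt_const

lemma pd_congr {F G : En m → E} {x : En m} (i : Fin m) (h : F =ᶠ[nhds x] G) :
    pd i F x = pd i G x := by
  unfold pd; rw [h.fderiv_eq]

lemma pd_smul {c : En m → ℝ} {G : En m → E} {x : En m} (i : Fin m)
    (hc : DifferentiableAt ℝ c x) (hG : DifferentiableAt ℝ G x) :
    pd i (fun y => c y • G y) x = pd i c x • G x + c x • pd i G x := by
  unfold pd
  rw [fderiv_fun_smul hc hG]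
  simp [add_comm]

lemma pd_inner {k : ℕ} {F G : En m → En k} {x : En m} (i : Fin m)
    (hF : DifferentiableAt ℝ F x) (hG : DifferentiableAt ℝ G x) :
    pd i (fun y => ⟪F y, G y⟫) x = ⟪F x, pd i G x⟫ + ⟪pd i F x, G x⟫ := by
  unfold pd
  rw [fderiv_inner_apply (𝕜 := ℝ) hF hG]

lemma pd_const {c : E} {x : En m} (i : Fin m) : pd i (fun _ => c) x = 0 := by
  unfold pd; rw [fderiv_fun_const]; rfl

lemma pd_add {F G : En m → E} {x : En m} (i : Fin m)
    (hF : DifferentiableAt ℝ F x) (hG : DifferentiableAt ℝ G x) :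
    pd i (fun y => F y + G y) x = pd i F x + pd i G x := by
  unfold pd; rw [fderiv_fun_add hF hG]; rfl

lemma pd_cmul {c : ℝ} {F : En m → ℝ} {x : En m} (i : Fin m)
    (hF : DifferentiableAt ℝ F x) :
    pd i (fun y => c * F y) x = c * pd i F x := by
  unfold pd; rw [fderiv_const_mul hF]; rfl

lemma deriv_eqOn_const {u : ℝ → ℝ} {c : ℝ} {s : Set ℝ} (hs : IsOpen s)
    (hu : ∀ t ∈ s, u t = c) {t : ℝ} (ht : t ∈ s) : deriv u t = 0 := by
  have h : u =ᶠ[nhds t] (fun _ => c) := Filter.eventually_of_mem (hs.mem_nhds ht) hu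
  rw [h.deriv_eq, deriv_const]

lemma hasDerivAt_inner_const {k : ℕ} (c : En k) {ν : ℝ → En k} {ν' : En k} {t : ℝ}
    (h : HasDerivAt ν ν' t) : HasDerivAt (fun s => ⟪ν s, c⟫) ⟪ν', c⟫ t := by
  simpa using h.inner ℝ (hasDerivAt_const t c)

lemma basis_orth {n : ℕ} (a0 : En (n+1)) (a : Fin n → En (n+1))
    (g : Matrix (Fin n) (Fin n) ℝ) (hg : ∀ i j, g i j = ⟪a i, a j⟫)
    (hdet : IsUnit g.det) (h00 : ⟪a0,a0⟫ = 1) (h0 : ∀ k, ⟪a0, a k⟫ = 0)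
    (v : En (n+1)) (hv0 : ⟪a0, v⟫ = 0) (hv : ∀ k, ⟪a k, v⟫ = 0) : v = 0 := by
  set b : Fin (n+1) → En (n+1) := Fin.cons a0 a with hb
  set T : En (n+1) →ₗ[ℝ] (Fin (n+1) → ℝ) :=
    LinearMap.pi (fun k => ((innerSL ℝ (b k)).toLinearMap)) with hT
  have hsurj : Function.Surjective T := by
    intro w
    refine ⟨(w 0) • a0 + ∑ l, (g⁻¹.mulVec (fun l => w l.succ)) l • a l, ?_⟩
    funext k
    have hTv : ∀ (u : En (n + 1)) (k), T u k = ⟪b k, u⟫ := fun u k => rfl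
    refine Fin.cases ?_ ?_ k
    · rw [hTv]
      have h00' : ‖a0‖ ^ 2 = 1 := by rw [← real_inner_self_eq_norm_sq]; exact h00
      simp [hb, inner_add_right, inner_smul_right, inner_sum, h00, h0, h00']
    · intro m
      rw [hTv]
      simp only [hb, Fin.cons_succ, inner_add_right, inner_smul_right, inner_sum]
      have hma0 : ⟪a m, a0⟫ = (0:ℝ) := by rw [real_inner_comm]; exact h0 m
      rw [hma0, mul_zero, zero_add]
      have : ∀ l, (g⁻¹.mulVec (fun l => w l.succ)) l * ⟪a m, a l⟫
          = g m l * (g⁻¹.mulVec (fun l => w l.succ)) l := by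
        intro l; rw [hg]; ring
      rw [Finset.sum_congr rfl (fun l _ => this l)]
      have : ∑ l, g m l * (g⁻¹.mulVec (fun l => w l.succ)) l
          = (g.mulVec (g⁻¹.mulVec (fun l => w l.succ))) m := rfl
      rw [this, Matrix.mulVec_mulVec, Matrix.mul_nonsing_inv g hdet]
      simp
  have hinj : Function.Injective T := by
    rw [LinearMap.injective_iff_surjective_of_finrank_eq_finrank ?_]
    · exact hsurj
    · simp [finrank_euclideanSpace_fin, Module.finrank_fintype_fun_eq_card]
  apply hinj
  rw [map_zero]
  funext k
  have hTv : T v k = ⟪b k, v⟫ := rfl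
  rw [hTv]
  refine Fin.cases ?_ ?_ k
  · simpa [hb] using hv0
  · intro m; simpa [hb] using hv m

end Helpers

/-- `∂²h_ij/∂t² |_(t=0) = φ''(0) g_ij + 4 ∂_i f ∂_j f − |∇f|² g_ij`. -/
theorem second_variation_second_fundamental_form {n : ℕ} (hn : 1 ≤ n) (U : Set (En n)) (hU : IsOpen U)
    (Φ : En n → En (n + 1)) (f : En n → ℝ) (φ : ℝ → ℝ) (ε : ℝ) (hε : 0 < ε)
    (hΦ : ContDiffOn ℝ (⊤ : ℕ∞) Φ U) (hf : ContDiffOn ℝ (⊤ : ℕ∞) f U)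
    (hφ : ContDiffOn ℝ (⊤ : ℕ∞) φ (Ioo (-ε) ε)) (hφ0 : φ 0 = 0)
    (hsph : ∀ x ∈ U, ‖Φ x‖ = 1)
    (himm : ∀ x ∈ U, (gmet Φ x).PosDef)
    (N : ℝ → En n → En (n + 1))
    (hNsm : ContDiffOn ℝ (⊤ : ℕ∞) (fun p : ℝ × En n => N p.1 p.2) (Ioo (-ε) ε ×ˢ U))
    (hNunit : ∀ t ∈ Ioo (-ε) ε, ∀ x ∈ U, ‖N t x‖ = 1)
    (hNorth : ∀ t ∈ Ioo (-ε) ε, ∀ x ∈ U, ∀ i : Fin n, ⟪N t x, pd i (Xvar f φ Φ t) x⟫ = 0)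
    (hN0 : ∀ x ∈ U, N 0 x = Φ x) :
    ∀ x ∈ U, ∀ i j : Fin n,
      deriv (deriv (fun t => sff (Xvar f φ Φ t) (N t) x i j)) 0
        = deriv (deriv φ) 0 * gmet Φ x i j + 4 * pd i f x * pd j f x
          - gradSq Φ f x * gmet Φ x i j := by
  intro x hx i j
  have h0I : (0:ℝ) ∈ Ioo (-ε) ε := ⟨by linarith, hε⟩
  have hΦx : ContDiffAt ℝ (⊤ : ℕ∞) Φ x := hΦ.contDiffAt (hU.mem_nhds hx)
  have hfx : ContDiffAt ℝ (⊤ : ℕ∞) f x := hf.contDiffAt (hU.mem_nhds hx)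
  have hΦdiff : DifferentiableAt ℝ Φ x := hΦx.differentiableAt (by simp)
  -- ν and its derivatives
  set ν : ℝ → En (n+1) := fun t => N t x with hνdef
  have hνsm : ContDiffOn ℝ (⊤ : ℕ∞) ν (Ioo (-ε) ε) := by
    have hc : ContDiffOn ℝ (⊤ : ℕ∞) (fun t : ℝ => ((t, x) : ℝ × En n)) (Ioo (-ε) ε) :=
      (contDiff_id.prodMk contDiff_const).contDiffOn
    exact hNsm.comp hc (fun t ht => ⟨ht, hx⟩)
  set ν1 : ℝ → En (n+1) := deriv ν with hν1def
  set ν2 : ℝ → En (n+1) := deriv ν1 with hν2def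
  have hν1sm : ContDiffOn ℝ (⊤ : ℕ∞) ν1 (Ioo (-ε) ε) := hνsm.deriv_of_isOpen isOpen_Ioo (by simp)
  have hνd : ∀ t ∈ Ioo (-ε) ε, HasDerivAt ν (ν1 t) t := fun t ht =>
    ((hνsm.contDiffAt (isOpen_Ioo.mem_nhds ht)).differentiableAt (by simp)).hasDerivAt
  have hν1d : ∀ t ∈ Ioo (-ε) ε, HasDerivAt ν1 (ν2 t) t := fun t ht =>
    ((hν1sm.contDiffAt (isOpen_Ioo.mem_nhds ht)).differentiableAt (by simp)).hasDerivAt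
  have hφ1sm : ContDiffOn ℝ (⊤ : ℕ∞) (deriv φ) (Ioo (-ε) ε) := hφ.deriv_of_isOpen isOpen_Ioo (by simp)
  have hφd : ∀ t ∈ Ioo (-ε) ε, HasDerivAt φ (deriv φ t) t := fun t ht =>
    ((hφ.contDiffAt (isOpen_Ioo.mem_nhds ht)).differentiableAt (by simp)).hasDerivAt
  have hφ1d : ∀ t ∈ Ioo (-ε) ε, HasDerivAt (deriv φ) (deriv (deriv φ) t) t := fun t ht =>
    ((hφ1sm.contDiffAt (isOpen_Ioo.mem_nhds ht)).differentiableAt (by simp)).hasDerivAt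
  have hν0 : ν 0 = Φ x := hN0 x hx
  -- sphere identities
  have hsph2 : ∀ y ∈ U, ⟪Φ y, Φ y⟫ = (1:ℝ) := by
    intro y hy
    rw [real_inner_self_eq_norm_mul_norm, hsph y hy]; norm_num
  have horthU : ∀ y ∈ U, ∀ k : Fin n, ⟪Φ y, pd k Φ y⟫ = 0 := by
    intro y hy k
    have hΦy : ContDiffAt ℝ (⊤ : ℕ∞) Φ y := hΦ.contDiffAt (hU.mem_nhds hy)
    have hdy : DifferentiableAt ℝ Φ y := hΦy.differentiableAt (by simp)
    have heq : (fun z => ⟪Φ z, Φ z⟫) =ᶠ[nhds y] (fun _ => (1:ℝ)) :=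
      Filter.eventually_of_mem (hU.mem_nhds hy) hsph2
    have h1 := pd_congr k heq
    rw [pd_const, pd_inner k hdy hdy] at h1
    have h2 : ⟪pd k Φ y, Φ y⟫ = ⟪Φ y, pd k Φ y⟫ := real_inner_comm _ _
    linarith
  have hgmet : ∀ k l : Fin n, gmet Φ x k l = ⟪pd k Φ x, pd l Φ x⟫ := fun k l => rfl
  have hdet : IsUnit (gmet Φ x).det := isUnit_iff_ne_zero.mpr (himm x hx).det_pos.ne'
  have hpdΦsm : ∀ k : Fin n, ContDiffAt ℝ (⊤ : ℕ∞) (fun y => pd k Φ y) x :=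
    fun k => pd_contDiffAt k hΦx
  have hWa0 : ⟪Φ x, pd j (fun y => pd i Φ y) x⟫ = -(gmet Φ x i j) := by
    have heq : (fun y => ⟪Φ y, pd i Φ y⟫) =ᶠ[nhds x] (fun _ => (0:ℝ)) :=
      Filter.eventually_of_mem (hU.mem_nhds hx) (fun y hy => horthU y hy i)
    have h1 := pd_congr j heq
    rw [pd_const, pd_inner j hΦdiff ((hpdΦsm i).differentiableAt (by simp))] at h1
    have h2 : ⟪pd j Φ x, pd i Φ x⟫ = gmet Φ x i j := by
      rw [hgmet, real_inner_comm]
    linarith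
  -- gradient facts
  have hgrad0 : ⟪Φ x, gradV Φ f x⟫ = 0 := by
    unfold gradV
    rw [inner_sum]
    refine Finset.sum_eq_zero fun k _ => ?_
    rw [inner_sum]
    refine Finset.sum_eq_zero fun l _ => ?_
    rw [real_inner_smul_right, horthU x hx l, mul_zero]
  have hgradk : ∀ k : Fin n, ⟪pd k Φ x, gradV Φ f x⟫ = pd k f x := by
    intro k
    unfold gradV
    rw [inner_sum]
    have hterm : ∀ i' : Fin n, ⟪pd k Φ x, ∑ j', ((gmet Φ x)⁻¹ i' j' * pd i' f x) • pd j' Φ x⟫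
        = pd i' f x * ((gmet Φ x)⁻¹ * gmet Φ x) i' k := by
      intro i'
      rw [inner_sum, Matrix.mul_apply, Finset.mul_sum]
      refine Finset.sum_congr rfl fun l _ => ?_
      rw [real_inner_smul_right]
      have : ⟪pd k Φ x, pd l Φ x⟫ = gmet Φ x l k := by rw [hgmet, real_inner_comm]
      rw [this]; ring
    rw [Finset.sum_congr rfl (fun i' _ => hterm i')]
    rw [Matrix.nonsing_inv_mul _ hdet]
    rw [Finset.sum_eq_single k (fun b _ hb => by rw [Matrix.one_apply_ne hb, mul_zero])
      (fun h => absurd (Finset.mem_univ k) h)]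
    rw [Matrix.one_apply_eq, mul_one]
  have hgg : ⟪gradV Φ f x, gradV Φ f x⟫ = gradSq Φ f x := by
    conv_lhs => rw [gradV]
    rw [sum_inner]
    unfold gradSq
    refine Finset.sum_congr rfl fun k _ => ?_
    rw [sum_inner]
    refine Finset.sum_congr rfl fun l _ => ?_
    rw [real_inner_smul_left]
    have h2 : (∑ i', ∑ j', ((gmet Φ x)⁻¹ i' j' * pd i' f x) • pd j' Φ x) = gradV Φ f x := rfl
    rw [h2, hgradk l]
  -- formula for spatial derivative of the variation
  have hXpd : ∀ (t : ℝ), ∀ y ∈ U, ∀ k : Fin n,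
      pd k (Xvar f φ Φ t) y = (t * pd k f y) • Φ y + (1 + t * f y + φ t) • pd k Φ y := by
    intro t y hy k
    have hfy : DifferentiableAt ℝ f y := (hf.contDiffAt (hU.mem_nhds hy)).differentiableAt (by simp)
    have hΦy : DifferentiableAt ℝ Φ y := (hΦ.contDiffAt (hU.mem_nhds hy)).differentiableAt (by simp)
    have hc : DifferentiableAt ℝ (fun z => 1 + t * f z + φ t) y :=
      ((differentiableAt_const (1:ℝ)).add (hfy.const_mul t)).add_const (φ t)
    have hXe : Xvar f φ Φ t = fun z => (1 + t * f z + φ t) • Φ z := funext fun z => rfl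
    rw [hXe, pd_smul k hc hΦy]
    have hpc : pd k (fun z => 1 + t * f z + φ t) y = t * pd k f y := by
      rw [pd_add k ((differentiableAt_const (1:ℝ)).fun_add (hfy.const_mul t))
        (differentiableAt_const (φ t)), pd_const, add_zero,
        pd_add k (differentiableAt_const (1:ℝ)) (hfy.const_mul t), pd_const, zero_add,
        pd_cmul k hfy]
    rw [hpc]
  -- unit-normal identities in t
  have hP : ∀ t ∈ Ioo (-ε) ε, ⟪ν t, ν t⟫ = (1:ℝ) := by
    intro t ht
    rw [real_inner_self_eq_norm_mul_norm]
    have : ‖ν t‖ = 1 := hNunit t ht x hx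
    rw [this]; norm_num
  have hP1 : ∀ t ∈ Ioo (-ε) ε, ⟪ν t, ν1 t⟫ + ⟪ν1 t, ν t⟫ = 0 := by
    intro t ht
    have hD : HasDerivAt (fun s => ⟪ν s, ν s⟫) (⟪ν t, ν1 t⟫ + ⟪ν1 t, ν t⟫) t :=
      (hνd t ht).inner ℝ (hνd t ht)
    rw [← hD.deriv]
    exact deriv_eqOn_const isOpen_Ioo hP ht
  have ha0n1 : ⟪ν1 0, Φ x⟫ = 0 := by
    have h := hP1 0 h0I
    rw [hν0] at h
    rw [real_inner_comm]
    linarith [real_inner_comm (Φ x) (ν1 0), h]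
  have ha0n2 : ⟪ν2 0, Φ x⟫ = -⟪ν1 0, ν1 0⟫ := by
    have hD : HasDerivAt (fun s => ⟪ν s, ν1 s⟫ + ⟪ν1 s, ν s⟫)
        ((⟪ν 0, ν2 0⟫ + ⟪ν1 0, ν1 0⟫) + (⟪ν1 0, ν1 0⟫ + ⟪ν2 0, ν 0⟫)) 0 :=
      ((hνd 0 h0I).inner ℝ (hν1d 0 h0I)).add ((hν1d 0 h0I).inner ℝ (hνd 0 h0I))
    have h0 : deriv (fun s => ⟪ν s, ν1 s⟫ + ⟪ν1 s, ν s⟫) 0 = 0 :=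
      deriv_eqOn_const isOpen_Ioo hP1 h0I
    have h := hD.deriv
    rw [h0] at h
    rw [hν0] at h
    rw [real_inner_comm]
    linarith [real_inner_comm (Φ x) (ν2 0), h]
  -- orthogonality identities in t
  have hQ : ∀ k : Fin n, ∀ t ∈ Ioo (-ε) ε,
      (t * pd k f x) * ⟪ν t, Φ x⟫ + (1 + t * f x + φ t) * ⟪ν t, pd k Φ x⟫ = 0 := by
    intro k t ht
    have h := hNorth t ht x hx k
    rw [hXpd t x hx k, inner_add_right, real_inner_smul_right, real_inner_smul_right] at h
    exact h
  have hQ1 : ∀ k : Fin n, ∀ t ∈ Ioo (-ε) ε,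
      (1 * pd k f x) * ⟪ν t, Φ x⟫ + (t * pd k f x) * ⟪ν1 t, Φ x⟫
        + ((0 + 1 * f x + deriv φ t) * ⟪ν t, pd k Φ x⟫
            + (1 + t * f x + φ t) * ⟪ν1 t, pd k Φ x⟫) = 0 := by
    intro k t ht
    have hD : HasDerivAt
        (fun s => (s * pd k f x) * ⟪ν s, Φ x⟫ + (1 + s * f x + φ s) * ⟪ν s, pd k Φ x⟫)
        ((1 * pd k f x) * ⟪ν t, Φ x⟫ + (t * pd k f x) * ⟪ν1 t, Φ x⟫
          + ((0 + 1 * f x + deriv φ t) * ⟪ν t, pd k Φ x⟫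
              + (1 + t * f x + φ t) * ⟪ν1 t, pd k Φ x⟫)) t :=
      (((hasDerivAt_id t).mul_const (pd k f x)).mul
          (hasDerivAt_inner_const (Φ x) (hνd t ht))).add
        ((((hasDerivAt_const t (1:ℝ)).add ((hasDerivAt_id t).mul_const (f x))).add
            (hφd t ht)).mul (hasDerivAt_inner_const (pd k Φ x) (hνd t ht)))
    rw [← hD.deriv]
    exact deriv_eqOn_const isOpen_Ioo (hQ k) ht
  have hakn1 : ∀ k : Fin n, ⟪ν1 0, pd k Φ x⟫ = -pd k f x := by
    intro k
    have h := hQ1 k 0 h0I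
    rw [hν0, hφ0, hsph2 x hx, horthU x hx k] at h
    linarith
  have hakn2 : ∀ k : Fin n, ⟪ν2 0, pd k Φ x⟫ = 2 * (f x + deriv φ 0) * pd k f x := by
    intro k
    have hD : HasDerivAt
        (fun s => (1 * pd k f x) * ⟪ν s, Φ x⟫ + (s * pd k f x) * ⟪ν1 s, Φ x⟫
          + ((0 + 1 * f x + deriv φ s) * ⟪ν s, pd k Φ x⟫
              + (1 + s * f x + φ s) * ⟪ν1 s, pd k Φ x⟫))
        (((1 * pd k f x) * ⟪ν1 0, Φ x⟫)
          + ((1 * pd k f x) * ⟪ν1 0, Φ x⟫ + (0 * pd k f x) * ⟪ν2 0, Φ x⟫)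
          + (((0 + deriv (deriv φ) 0) * ⟪ν 0, pd k Φ x⟫
                + (0 + 1 * f x + deriv φ 0) * ⟪ν1 0, pd k Φ x⟫)
              + ((0 + 1 * f x + deriv φ 0) * ⟪ν1 0, pd k Φ x⟫
                  + (1 + 0 * f x + φ 0) * ⟪ν2 0, pd k Φ x⟫))) 0 := by
      refine HasDerivAt.add (HasDerivAt.add ?_ ?_) (HasDerivAt.add ?_ ?_)
      · exact ((hasDerivAt_inner_const (Φ x) (hνd 0 h0I)).const_mul (1 * pd k f x)).congr_deriv
          (by ring)
      · exact (((hasDerivAt_id 0).mul_const (pd k f x)).mul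
          (hasDerivAt_inner_const (Φ x) (hν1d 0 h0I)))
      · exact (((hasDerivAt_const 0 (0 + 1 * f x)).fun_add (hφ1d 0 h0I)).mul
          (hasDerivAt_inner_const (pd k Φ x) (hνd 0 h0I))).congr_deriv (by ring)
      · exact ((((hasDerivAt_const 0 (1:ℝ)).add ((hasDerivAt_id 0).mul_const (f x))).add
          (hφd 0 h0I)).mul (hasDerivAt_inner_const (pd k Φ x) (hν1d 0 h0I)))
    have h0 : deriv (fun s => (1 * pd k f x) * ⟪ν s, Φ x⟫ + (s * pd k f x) * ⟪ν1 s, Φ x⟫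
          + ((0 + 1 * f x + deriv φ s) * ⟪ν s, pd k Φ x⟫
              + (1 + s * f x + φ s) * ⟪ν1 s, pd k Φ x⟫)) 0 = 0 :=
      deriv_eqOn_const isOpen_Ioo (hQ1 k) h0I
    have h := hD.deriv
    rw [h0] at h
    rw [hν0, hφ0, ha0n1, horthU x hx k, hakn1 k] at h
    linarith
  -- explicit first and second t-derivatives of the normal at t = 0
  have horthU' : ∀ k : Fin n, ⟪pd k Φ x, Φ x⟫ = (0:ℝ) := fun k => by
    rw [real_inner_comm]; exact horthU x hx k
  have ha0n1' : ⟪Φ x, ν1 0⟫ = (0:ℝ) := by rw [real_inner_comm]; exact ha0n1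
  have hakn1' : ∀ k : Fin n, ⟪pd k Φ x, ν1 0⟫ = -pd k f x := fun k => by
    rw [real_inner_comm]; exact hakn1 k
  have ha0n2' : ⟪Φ x, ν2 0⟫ = -⟪ν1 0, ν1 0⟫ := by rw [real_inner_comm]; exact ha0n2
  have hakn2' : ∀ k : Fin n, ⟪pd k Φ x, ν2 0⟫ = 2 * (f x + deriv φ 0) * pd k f x := fun k => by
    rw [real_inner_comm]; exact hakn2 k
  have hν1val : ν1 0 = -gradV Φ f x := by
    refine eq_neg_of_add_eq_zero_left (basis_orth (Φ x) (fun k => pd k Φ x) (gmet Φ x)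
      (fun a b => hgmet a b) hdet (hsph2 x hx) (fun k => horthU x hx k)
      (ν1 0 + gradV Φ f x) ?_ ?_)
    · rw [inner_add_right, ha0n1', hgrad0]; norm_num
    · intro k
      show ⟪pd k Φ x, ν1 0 + gradV Φ f x⟫ = 0
      rw [inner_add_right, hakn1' k, hgradk k]; ring
  have hν2val : ν2 0 = (2 * (f x + deriv φ 0)) • gradV Φ f x - gradSq Φ f x • Φ x := by
    refine sub_eq_zero.mp (basis_orth (Φ x) (fun k => pd k Φ x) (gmet Φ x)
      (fun a b => hgmet a b) hdet (hsph2 x hx) (fun k => horthU x hx k)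
      (ν2 0 - ((2 * (f x + deriv φ 0)) • gradV Φ f x - gradSq Φ f x • Φ x)) ?_ ?_)
    · rw [inner_sub_right, inner_sub_right, real_inner_smul_right, real_inner_smul_right,
        hgrad0, hsph2 x hx, ha0n2', hν1val, inner_neg_neg, hgg]
      ring
    · intro k
      show ⟪pd k Φ x, ν2 0 - ((2 * (f x + deriv φ 0)) • gradV Φ f x - gradSq Φ f x • Φ x)⟫ = 0
      rw [inner_sub_right, inner_sub_right, real_inner_smul_right, real_inner_smul_right,
        hgradk k, hakn2' k, horthU' k]
      ring
  have hgrad0' : ⟪gradV Φ f x, Φ x⟫ = (0:ℝ) := by rw [real_inner_comm]; exact hgrad0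
  have hgradk' : ∀ k : Fin n, ⟪gradV Φ f x, pd k Φ x⟫ = pd k f x := fun k => by
    rw [real_inner_comm]; exact hgradk k
  -- the second fundamental form as an explicit function of t
  set V : En (n+1) := pd j (fun y => pd i f y) x • Φ x + pd i f x • pd j Φ x
      + pd j f x • pd i Φ x with hVdef
  set W : En (n+1) := pd j (fun y => pd i Φ y) x with hWdef
  have hform : ∀ t ∈ Ioo (-ε) ε, sff (Xvar f φ Φ t) (N t) x i j
      = -((t * ⟪ν t, V⟫) + (1 + t * f x + φ t) * ⟪ν t, W⟫) := by
    intro t ht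
    have hNyc : ContDiffAt ℝ (⊤ : ℕ∞) (fun y => N t y) x := by
      have hc : ContDiffOn ℝ (⊤ : ℕ∞) (fun y : En n => ((t, y) : ℝ × En n)) U :=
        (contDiff_const.prodMk contDiff_id).contDiffOn
      exact (hNsm.comp hc (fun y hy => ⟨ht, hy⟩)).contDiffAt (hU.mem_nhds hx)
    have hcX : ContDiffAt ℝ (⊤ : ℕ∞) (Xvar f φ Φ t) x := by
      have hXe : Xvar f φ Φ t = fun z => (1 + t * f z + φ t) • Φ z := funext fun z => rfl
      rw [hXe]
      exact ((contDiffAt_const.add (contDiffAt_const.mul hfx)).add contDiffAt_const).smul hΦx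
    have hiXc : ContDiffAt ℝ (⊤ : ℕ∞) (fun y => pd i (Xvar f φ Φ t) y) x := pd_contDiffAt i hcX
    have heq0 : (fun y => ⟪N t y, pd i (Xvar f φ Φ t) y⟫) =ᶠ[nhds x] (fun _ => (0:ℝ)) :=
      Filter.eventually_of_mem (hU.mem_nhds hx) (fun y hy => hNorth t ht y hy i)
    have h1 := pd_congr j heq0
    rw [pd_const, pd_inner j (hNyc.differentiableAt (by simp)) (hiXc.differentiableAt (by simp))] at h1
    have h2 : pd j (fun y => pd i (Xvar f φ Φ t) y) x = t • V + (1 + t * f x + φ t) • W := by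
      have heq1 : (fun y => pd i (Xvar f φ Φ t) y)
          =ᶠ[nhds x] (fun y => (t * pd i f y) • Φ y + (1 + t * f y + φ t) • pd i Φ y) :=
        Filter.eventually_of_mem (hU.mem_nhds hx) (fun y hy => hXpd t y hy i)
      rw [pd_congr j heq1]
      have hdf : DifferentiableAt ℝ (fun y => pd i f y) x :=
        (pd_contDiffAt i hfx).differentiableAt (by simp)
      have hdΦi : DifferentiableAt ℝ (fun y => pd i Φ y) x :=
        (hpdΦsm i).differentiableAt (by simp)
      have hfdiff : DifferentiableAt ℝ f x := hfx.differentiableAt (by simp)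
      have hdc1 : DifferentiableAt ℝ (fun y => t * pd i f y) x := hdf.const_mul t
      have hdc2 : DifferentiableAt ℝ (fun y => 1 + t * f y + φ t) x :=
        ((differentiableAt_const (1:ℝ)).add (hfdiff.const_mul t)).add_const (φ t)
      rw [pd_add j (hdc1.fun_smul hΦdiff) (hdc2.fun_smul hdΦi), pd_smul j hdc1 hΦdiff,
        pd_smul j hdc2 hdΦi, pd_cmul j hdf]
      have hpc : pd j (fun z => 1 + t * f z + φ t) x = t * pd j f x := by
        rw [pd_add j ((differentiableAt_const (1:ℝ)).fun_add (hfdiff.const_mul t))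
          (differentiableAt_const (φ t)), pd_const, add_zero,
          pd_add j (differentiableAt_const (1:ℝ)) (hfdiff.const_mul t), pd_const, zero_add,
          pd_cmul j hfdiff]
      rw [hpc, hVdef, hWdef]
      module
    have h3 : sff (Xvar f φ Φ t) (N t) x i j
        = ⟪pd j (fun y => N t y) x, pd i (Xvar f φ Φ t) x⟫ := by
      rw [show sff (Xvar f φ Φ t) (N t) x i j
        = ⟪pd i (Xvar f φ Φ t) x, pd j (fun y => N t y) x⟫ from rfl, real_inner_comm]
    have h5 : ⟪N t x, t • V + (1 + t * f x + φ t) • W⟫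
        = t * ⟪N t x, V⟫ + (1 + t * f x + φ t) * ⟪N t x, W⟫ := by
      rw [inner_add_right, real_inner_smul_right, real_inner_smul_right]
    show sff (Xvar f φ Φ t) (N t) x i j
      = -((t * ⟪N t x, V⟫) + (1 + t * f x + φ t) * ⟪N t x, W⟫)
    rw [h3, show ⟪pd j (fun y => N t y) x, pd i (Xvar f φ Φ t) x⟫
      = -⟪N t x, pd j (fun y => pd i (Xvar f φ Φ t) y) x⟫ by linarith, h2, h5]
  -- endgame: compute the second derivative at 0
  set A : ℝ → ℝ := fun s => ⟪ν s, V⟫ with hAdef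
  set B : ℝ → ℝ := fun s => ⟪ν s, W⟫ with hBdef
  set F : ℝ → ℝ := fun s => -((s * A s) + (1 + s * f x + φ s) * B s) with hFdef
  set F1 : ℝ → ℝ := fun s => -((1 * A s + s * ⟪ν1 s, V⟫)
      + ((0 + 1 * f x + deriv φ s) * B s + (1 + s * f x + φ s) * ⟪ν1 s, W⟫)) with hF1def
  have hFd : ∀ t ∈ Ioo (-ε) ε, HasDerivAt F (F1 t) t := by
    intro t ht
    exact (((hasDerivAt_id t).mul (hasDerivAt_inner_const V (hνd t ht))).add
      ((((hasDerivAt_const t (1:ℝ)).add ((hasDerivAt_id t).mul_const (f x))).add (hφd t ht)).mul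
        (hasDerivAt_inner_const W (hνd t ht)))).neg
  have hkey : deriv (deriv (fun t => sff (Xvar f φ Φ t) (N t) x i j)) 0 = deriv F1 0 := by
    have heqF : (fun t => sff (Xvar f φ Φ t) (N t) x i j) =ᶠ[nhds 0] F :=
      Filter.eventually_of_mem (isOpen_Ioo.mem_nhds h0I) (fun t ht => hform t ht)
    have h1 : deriv (fun t => sff (Xvar f φ Φ t) (N t) x i j) =ᶠ[nhds 0] deriv F := heqF.deriv
    have h2 : deriv F =ᶠ[nhds 0] F1 :=
      Filter.eventually_of_mem (isOpen_Ioo.mem_nhds h0I) (fun t ht => (hFd t ht).deriv)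
    exact (h1.trans h2).deriv_eq
  have hD : HasDerivAt F1
      (-((1 * ⟪ν1 0, V⟫ + (1 * ⟪ν1 0, V⟫ + 0 * ⟪ν2 0, V⟫))
        + (((0 + deriv (deriv φ) 0) * B 0 + (0 + 1 * f x + deriv φ 0) * ⟪ν1 0, W⟫)
            + ((0 + 1 * f x + deriv φ 0) * ⟪ν1 0, W⟫ + (1 + 0 * f x + φ 0) * ⟪ν2 0, W⟫)))) 0 := by
    refine HasDerivAt.neg (HasDerivAt.add (HasDerivAt.add ?_ ?_) (HasDerivAt.add ?_ ?_))
    · exact (hasDerivAt_inner_const V (hνd 0 h0I)).const_mul 1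
    · exact (hasDerivAt_id 0).mul (hasDerivAt_inner_const V (hν1d 0 h0I))
    · exact ((hasDerivAt_const 0 (0 + 1 * f x)).add (hφ1d 0 h0I)).mul
        (hasDerivAt_inner_const W (hνd 0 h0I))
    · exact (((hasDerivAt_const 0 (1:ℝ)).add ((hasDerivAt_id 0).mul_const (f x))).add
        (hφd 0 h0I)).mul (hasDerivAt_inner_const W (hν1d 0 h0I))
  rw [hkey, hD.deriv]
  have e1 : ⟪ν1 0, V⟫ = -(pd i f x * pd j f x + pd j f x * pd i f x) := by
    rw [hν1val, inner_neg_left, hVdef, inner_add_right, inner_add_right,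
      real_inner_smul_right, real_inner_smul_right, real_inner_smul_right,
      hgrad0', hgradk' j, hgradk' i]
    ring
  have e2 : B 0 = -(gmet Φ x i j) := by
    show ⟪ν 0, W⟫ = -(gmet Φ x i j)
    rw [hν0]
    exact hWa0
  have e3 : ⟪ν1 0, W⟫ = -⟪gradV Φ f x, W⟫ := by rw [hν1val, inner_neg_left]
  have e4 : ⟪ν2 0, W⟫ = 2 * (f x + deriv φ 0) * ⟪gradV Φ f x, W⟫
      + gradSq Φ f x * gmet Φ x i j := by
    rw [hν2val, inner_sub_left, real_inner_smul_left, real_inner_smul_left, hWa0]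
    ring
  rw [e1, e2, e3, e4, hφ0]
  ring
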